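/- Let M, Q, J be real n×n matrices where M is symmetric positive definite, Q is symmetric, M and Q commute, and J is skew-symmetric. Let X : ℝ → ℝⁿ be differentiable with M X'(t) = J Q X(t) for all t (the conservative flux case τ = ξ = 0 with zero boundary input). Then the discrete Hamiltonian Ĥ(t) = ½ X(t)ᵀ Q M X(t) is constant in t: the structure-preserving DG discretization with conservative (unstabilized) numerical fluxes exactly conserves the discrete energy. -/

import Mathlib

/-! Along a solution, `d/dt (Xᵀ Q M X) = 2 X'ᵀ Q M X = 2 (M X')ᵀ (Q X) = 2 (J Q X)ᵀ (Q X)`: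
symmetry of `M` and `Q M = M Q` move `M` onto `X'`, and the last quadratic form vanishes because
`J` is skew-symmetric. -/

open Matrix

theorem Matrix.dotProduct_mulVec_self_eq_zero_of_transpose_eq_neg {ι R : Type*} [Fintype ι]
    [CommRing R] [IsAddTorsionFree R] {J : Matrix ι ι R} (hJ : Jᵀ = -J) (v : ι → R) :
    v ⬝ᵥ J *ᵥ v = 0 := by
  rw [← self_eq_neg]
  calc v ⬝ᵥ J *ᵥ v = (v ᵥ* J) ⬝ᵥ v := dotProduct_mulVec v J v
    _ = -(v ⬝ᵥ J *ᵥ v) := by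
      rw [← mulVec_transpose, hJ, neg_mulVec, neg_dotProduct, dotProduct_comm]

section Deriv

variable {𝕜 ι : Type*} [NontriviallyNormedField 𝕜] [Fintype ι] {f g : 𝕜 → ι → 𝕜}
  {f' g' : ι → 𝕜} {x : 𝕜}

theorem HasDerivAt.dotProduct (hf : HasDerivAt f f' x) (hg : HasDerivAt g g' x) :
    HasDerivAt (fun t => f t ⬝ᵥ g t) (f' ⬝ᵥ g x + f x ⬝ᵥ g') x := by
  have hsum := HasDerivAt.fun_sum (u := Finset.univ) fun i _ =>
    (hasDerivAt_pi.mp hf i).mul (hasDerivAt_pi.mp hg i)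
  rw [Finset.sum_add_distrib] at hsum
  exact hsum

theorem HasDerivAt.mulVec {m : Type*} [Fintype m] (A : Matrix m ι 𝕜) (hf : HasDerivAt f f' x) :
    HasDerivAt (fun t => A *ᵥ f t) (A *ᵥ f') x :=
  hasDerivAt_pi.mpr fun i => by
    have hrow := (hasDerivAt_const x (A i)).dotProduct hf
    rwa [zero_dotProduct, zero_add] at hrow

theorem HasDerivAt.dotProduct_mulVec_self_of_isSymm {A : Matrix ι ι 𝕜} (hA : A.IsSymm)
    (hf : HasDerivAt f f' x) :
    HasDerivAt (fun t => f t ⬝ᵥ A *ᵥ f t) (2 * (f' ⬝ᵥ A *ᵥ f x)) x := by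
  have hswap : f x ⬝ᵥ A *ᵥ f' = f' ⬝ᵥ A *ᵥ f x := by
    rw [dotProduct_mulVec, ← mulVec_transpose, hA.eq, dotProduct_comm]
  convert hf.dotProduct (hf.mulVec A) using 1
  rw [hswap, two_mul]

end Deriv

/-- **Exact discrete energy conservation for conservative numerical fluxes.**
With `M = Mᵀ > 0`, `Q = Qᵀ` commuting with `M`, `J = -Jᵀ`, and differentiable
state `X` satisfying `M X' = J Q X` (conservative flux `τ = ξ = 0`, zero input),
the discrete Hamiltonian `Ĥ = ½ Xᵀ Q M X` is constant in time. -/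
theorem discrete_pH_energy_conservation
    {n : ℕ} (M Q J : Matrix (Fin n) (Fin n) ℝ)
    (hM : M.PosDef) (hQ : Q.IsSymm) (hMQ : M * Q = Q * M) (hJ : Jᵀ = -J)
    (X : ℝ → Fin n → ℝ) (hX : Differentiable ℝ X)
    (hode : ∀ t, M.mulVec (deriv X t) = J.mulVec (Q.mulVec (X t))) :
    ∀ s t : ℝ, (1/2) * (X s ⬝ᵥ (Q * M).mulVec (X s))
      = (1/2) * (X t ⬝ᵥ (Q * M).mulVec (X t)) := by
  have hMsymm : M.IsSymm := by
    rw [IsSymm, ← conjTranspose_eq_transpose_of_trivial]; exact hM.isHermitian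
  have hQMsymm : (Q * M).IsSymm := by
    rw [IsSymm, transpose_mul, hQ.eq, hMsymm.eq, hMQ]
  have hrate : ∀ t, deriv X t ⬝ᵥ (Q * M) *ᵥ X t = 0 := fun t => by
    calc deriv X t ⬝ᵥ (Q * M) *ᵥ X t = (M *ᵥ deriv X t) ⬝ᵥ Q *ᵥ X t := by
          rw [← hMQ, ← mulVec_mulVec, dotProduct_mulVec, ← mulVec_transpose, hMsymm.eq]
      _ = 0 := by
          rw [hode, dotProduct_comm]
          exact dotProduct_mulVec_self_eq_zero_of_transpose_eq_neg hJ _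
  have henergy : ∀ t, HasDerivAt (fun t => X t ⬝ᵥ (Q * M) *ᵥ X t) 0 t := fun t => by
    simpa [hrate t] using (hX t).hasDerivAt.dotProduct_mulVec_self_of_isSymm hQMsymm
  intro s t
  rw [is_const_of_deriv_eq_zero (fun u => (henergy u).differentiableAt)
    (fun u => (henergy u).deriv) s t]
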